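/- arXiv:0802.1301 — 2 statements merged into one kernel-verified Lean document; each statement's English description precedes it below -/
import Mathlib

section
/- The polynomial P₁₀(r₀) = 8r₀¹⁰ - 13r₀⁹ - 42r₀⁸ - 331r₀⁷ - 220r₀⁶ + 733r₀⁵ + 6646r₀⁴ + 19883r₀³ + 28840r₀² + 18224r₀ + 4096 is irreducible over ℚ. -/
open Polynomial

namespace ListPoly

variable {R : Type*} [CommRing R]

/-- Interpret a little-endian coefficient list as a polynomial. -/
noncomputable def toPoly : List R → R[X]
  | [] => 0
  | a :: t => C a + X * toPoly t

@[simp] lemma toPoly_nil : toPoly ([] : List R) = 0 := rfl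
@[simp] lemma toPoly_cons (a : R) (t : List R) : toPoly (a :: t) = C a + X * toPoly t := rfl

lemma toPoly_coeff (l : List R) (n : ℕ) : (toPoly l).coeff n = l.getD n 0 := by
  induction l generalizing n with
  | nil => simp
  | cons a t ih =>
    cases n with
    | zero => simp [mul_coeff_zero]
    | succ n => simp [coeff_X_mul, ih]

def addL : List R → List R → List R
  | [], l => l
  | l, [] => l
  | a :: s, b :: t => (a + b) :: addL s t

lemma toPoly_addL (s t : List R) : toPoly (addL s t) = toPoly s + toPoly t := by
  induction s generalizing t with
  | nil => simp [addL]
  | cons a s ih =>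
    cases t with
    | nil => simp [addL]
    | cons b t => simp [addL, ih]; ring

def smulL (c : R) (l : List R) : List R := l.map (c * ·)

lemma toPoly_smulL (c : R) (l : List R) : toPoly (smulL c l) = C c * toPoly l := by
  induction l with
  | nil => simp [smulL]
  | cons a t ih => simp [smulL] at ih ⊢; rw [ih]; ring

def shiftL : ℕ → List R → List R
  | 0, l => l
  | n + 1, l => 0 :: shiftL n l

lemma toPoly_shiftL (n : ℕ) (l : List R) : toPoly (shiftL n l) = X ^ n * toPoly l := by
  induction n with
  | zero => simp [shiftL]
  | succ n ih => simp [shiftL, ih]; ring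

def subL (s t : List R) : List R := addL s (smulL (-1) t)

lemma toPoly_subL (s t : List R) : toPoly (subL s t) = toPoly s - toPoly t := by
  simp [subL, toPoly_addL, toPoly_smulL]; ring

variable [DecidableEq R]

def trimL : List R → List R
  | [] => []
  | a :: t =>
    match trimL t with
    | [] => if a = 0 then [] else [a]
    | b :: t' => a :: b :: t'

lemma toPoly_trimL (l : List R) : toPoly (trimL l) = toPoly l := by
  induction l with
  | nil => rfl
  | cons a t ih =>
    simp only [trimL]
    cases h : trimL t with
    | nil =>
      rw [h] at ih
      by_cases ha : a = 0 <;> simp [ha, ← ih]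
    | cons b t' =>
      rw [h] at ih
      simp [← ih]

/-- One fuel-bounded monic reduction. -/
def red (g : List R) : ℕ → List R → List R
  | 0, f => trimL f
  | k + 1, f =>
    let f' := trimL f
    if f'.length < g.length then f'
    else red g k (subL f' (shiftL (f'.length - g.length) (smulL (f'.getLastD 0) g)))

lemma red_dvd_sub (g : List R) (k : ℕ) (f : List R) :
    toPoly g ∣ toPoly f - toPoly (red g k f) := by
  induction k generalizing f with
  | zero => simp [red, toPoly_trimL]
  | succ k ih =>
    rw [red]
    split
    · simp [toPoly_trimL]
    · have h1 := ih (subL (trimL f) (shiftL ((trimL f).length - g.length)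
        (smulL ((trimL f).getLastD 0) g)))
      have h2 : toPoly f - toPoly (red g k (subL (trimL f)
          (shiftL ((trimL f).length - g.length) (smulL ((trimL f).getLastD 0) g)))) =
          (toPoly (subL (trimL f) (shiftL ((trimL f).length - g.length)
            (smulL ((trimL f).getLastD 0) g))) - toPoly (red g k (subL (trimL f)
            (shiftL ((trimL f).length - g.length) (smulL ((trimL f).getLastD 0) g))))) +
          (C ((trimL f).getLastD 0) * X ^ ((trimL f).length - g.length)) * toPoly g := by
        rw [toPoly_subL, toPoly_shiftL, toPoly_smulL, toPoly_trimL]; ring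
      rw [h2]
      exact dvd_add h1 (dvd_mul_left _ _)

lemma toPoly_ne_zero_of_any (l : List R) (h : l.any (· ≠ 0)) : toPoly l ≠ 0 := by
  intro h0
  rw [List.any_eq_true] at h
  obtain ⟨x, hx, hxne⟩ := h
  obtain ⟨i, hi⟩ := List.get_of_mem hx
  have := toPoly_coeff l i
  rw [h0, List.getD_eq_getElem?_getD] at this
  simp only [decide_eq_true_eq] at hxne
  apply hxne
  rw [← hi]
  have : l.get i = (0:R) := by
    have h2 := this.symm
    rwa [List.getElem?_eq_getElem i.isLt, Option.getD_some, ← List.get_eq_getElem] at h2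
  rw [this]

lemma natDegree_toPoly_lt (l : List R) (h : l ≠ []) : (toPoly l).natDegree < l.length := by
  rcases Nat.lt_or_ge (toPoly l).natDegree l.length with h1 | h1
  · exact h1
  · exfalso
    by_cases h0 : toPoly l = 0
    · rw [h0, natDegree_zero] at h1
      have := List.length_pos_iff.mpr h
      omega
    · have := toPoly_coeff l (toPoly l).natDegree
      rw [List.getD_eq_getElem?_getD, List.getElem?_eq_none (by omega), Option.getD_none] at this
      exact h0 (leadingCoeff_eq_zero.mp this)

end ListPoly


namespace ListPoly

lemma toPoly_map {R S : Type*} [CommRing R] [CommRing S] (φ : R →+* S) (l : List R) :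
    (toPoly l).map φ = toPoly (l.map φ) := by
  induction l with
  | nil => simp
  | cons a t ih => simp [Polynomial.map_add, Polynomial.map_mul, ih]

/-- The target polynomial mod 3 as a coefficient list. -/
def FL : List (ZMod 3) := [1, 2, 1, 2, 1, 1, 2, 2, 0, 2, 2]

def check (g : List (ZMod 3)) : Bool :=
  let r := red g 12 FL
  decide (r.length < g.length) && r.any (· ≠ 0)

lemma not_dvd_of_check (gl : List (ZMod 3)) (g : (ZMod 3)[X]) (hg : toPoly gl = g)
    (hlen : gl.length = g.natDegree + 1) (hc : check gl = true) : ¬ g ∣ toPoly FL := by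
  intro hdvd
  have h1 : g ∣ toPoly FL - toPoly (red gl 12 FL) := hg ▸ red_dvd_sub gl 12 FL
  have h2 : g ∣ toPoly (red gl 12 FL) := by
    have := dvd_sub hdvd h1
    simpa using this
  unfold check at hc
  simp only [Bool.and_eq_true, decide_eq_true_eq] at hc
  have hlt := hc.1
  have hr0 : toPoly (red gl 12 FL) ≠ 0 := toPoly_ne_zero_of_any _ hc.2
  have hrne : red gl 12 FL ≠ [] := by
    intro h; rw [h] at hc; simp at hc
  have hdlt := natDegree_toPoly_lt (red gl 12 FL) hrne
  have := Polynomial.natDegree_le_of_dvd h2 hr0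
  omega

lemma bridge1 (g : (ZMod 3)[X]) (hm : g.Monic) (hd : g.natDegree = 1) :
    toPoly [g.coeff 0, 1] = g := by
  ext m
  rw [toPoly_coeff]
  have hlead : g.coeff 1 = 1 := by simpa [hd] using hm.coeff_natDegree
  rcases m with _|_|m
  · simp
  · simpa using hlead.symm
  · rw [g.coeff_eq_zero_of_natDegree_lt (show g.natDegree < m + 1 + 1 by omega)]
    simp

set_option maxRecDepth 40000 in
lemma D1 : ∀ a : ZMod 3, check [a, 1] = true := by decide

lemma bridge2 (g : (ZMod 3)[X]) (hm : g.Monic) (hd : g.natDegree = 2) :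
    toPoly [g.coeff 0, g.coeff 1, 1] = g := by
  ext m
  rw [toPoly_coeff]
  have hlead : g.coeff 2 = 1 := by simpa [hd] using hm.coeff_natDegree
  rcases m with _|_|_|m
  · simp
  · simp
  · simpa using hlead.symm
  · rw [g.coeff_eq_zero_of_natDegree_lt (show g.natDegree < m + 1 + 1 + 1 by omega)]
    simp

set_option maxRecDepth 40000 in
lemma D2 : ∀ a b : ZMod 3, check [a, b, 1] = true := by decide

lemma bridge3 (g : (ZMod 3)[X]) (hm : g.Monic) (hd : g.natDegree = 3) :
    toPoly [g.coeff 0, g.coeff 1, g.coeff 2, 1] = g := by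
  ext m
  rw [toPoly_coeff]
  have hlead : g.coeff 3 = 1 := by simpa [hd] using hm.coeff_natDegree
  rcases m with _|_|_|_|m
  · simp
  · simp
  · simp
  · simpa using hlead.symm
  · rw [g.coeff_eq_zero_of_natDegree_lt (show g.natDegree < m + 1 + 1 + 1 + 1 by omega)]
    simp

set_option maxRecDepth 40000 in
lemma D3 : ∀ a b c : ZMod 3, check [a, b, c, 1] = true := by decide

lemma bridge4 (g : (ZMod 3)[X]) (hm : g.Monic) (hd : g.natDegree = 4) :
    toPoly [g.coeff 0, g.coeff 1, g.coeff 2, g.coeff 3, 1] = g := by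
  ext m
  rw [toPoly_coeff]
  have hlead : g.coeff 4 = 1 := by simpa [hd] using hm.coeff_natDegree
  rcases m with _|_|_|_|_|m
  · simp
  · simp
  · simp
  · simp
  · simpa using hlead.symm
  · rw [g.coeff_eq_zero_of_natDegree_lt (show g.natDegree < m + 1 + 1 + 1 + 1 + 1 by omega)]
    simp

set_option maxRecDepth 40000 in
lemma D4 : ∀ a b c d : ZMod 3, check [a, b, c, d, 1] = true := by decide

lemma bridge5 (g : (ZMod 3)[X]) (hm : g.Monic) (hd : g.natDegree = 5) :
    toPoly [g.coeff 0, g.coeff 1, g.coeff 2, g.coeff 3, g.coeff 4, 1] = g := by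
  ext m
  rw [toPoly_coeff]
  have hlead : g.coeff 5 = 1 := by simpa [hd] using hm.coeff_natDegree
  rcases m with _|_|_|_|_|_|m
  · simp
  · simp
  · simp
  · simp
  · simp
  · simpa using hlead.symm
  · rw [g.coeff_eq_zero_of_natDegree_lt (show g.natDegree < m + 1 + 1 + 1 + 1 + 1 + 1 by omega)]
    simp

set_option maxRecDepth 40000 in
lemma D5 : ∀ a b c d e : ZMod 3, check [a, b, c, d, e, 1] = true := by decide

lemma noSmallFactor (g : (ZMod 3)[X]) (hm : g.Monic) (h1 : 1 ≤ g.natDegree)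
    (h5 : g.natDegree ≤ 5) : ¬ g ∣ toPoly FL := by
  obtain h | h | h | h | h :
      g.natDegree = 1 ∨ g.natDegree = 2 ∨ g.natDegree = 3 ∨ g.natDegree = 4 ∨
        g.natDegree = 5 := by omega
  · exact not_dvd_of_check _ g (bridge1 g hm h) (by simp [h]) (D1 (g.coeff 0))
  · exact not_dvd_of_check _ g (bridge2 g hm h) (by simp [h]) (D2 (g.coeff 0) (g.coeff 1))
  · exact not_dvd_of_check _ g (bridge3 g hm h) (by simp [h]) (D3 (g.coeff 0) (g.coeff 1) (g.coeff 2))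
  · exact not_dvd_of_check _ g (bridge4 g hm h) (by simp [h]) (D4 (g.coeff 0) (g.coeff 1) (g.coeff 2) (g.coeff 3))
  · exact not_dvd_of_check _ g (bridge5 g hm h) (by simp [h]) (D5 (g.coeff 0) (g.coeff 1) (g.coeff 2) (g.coeff 3) (g.coeff 4))

end ListPoly

open ListPoly

/-- The target polynomial over ℤ. -/
noncomputable def FZ : ℤ[X] :=
  8 * X ^ 10 - 13 * X ^ 9 - 42 * X ^ 8 - 331 * X ^ 7 - 220 * X ^ 6
    + 733 * X ^ 5 + 6646 * X ^ 4 + 19883 * X ^ 3 + 28840 * X ^ 2 + 18224 * X + 4096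

def LZ : List ℤ := [4096, 18224, 28840, 19883, 6646, 733, -220, -331, -42, -13, 8]

lemma FZ_eq : FZ = toPoly LZ := by
  simp only [FZ, LZ, toPoly_cons, toPoly_nil, map_ofNat, map_neg]
  ring

lemma FZ_coeff (n : ℕ) : FZ.coeff n = LZ.getD n 0 := by rw [FZ_eq, toPoly_coeff]

lemma FZ_natDegree : FZ.natDegree = 10 := by
  have h1 : FZ.coeff 10 ≠ 0 := by rw [FZ_coeff]; decide
  have h2 : FZ.natDegree ≤ 10 := by
    apply Polynomial.natDegree_le_iff_coeff_eq_zero.mpr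
    intro m hm
    rw [FZ_coeff, List.getD_eq_getElem?_getD, List.getElem?_eq_none (by simp [LZ]; omega)]
    rfl
  exact le_antisymm h2 (Polynomial.le_natDegree_of_ne_zero h1)

lemma FZ_ne_zero : FZ ≠ 0 := fun h => by
  have := FZ_coeff 10
  rw [h] at this
  simp [LZ] at this

lemma FZ_leadingCoeff : FZ.leadingCoeff = 8 := by
  rw [Polynomial.leadingCoeff, FZ_natDegree, FZ_coeff]; rfl

lemma FZ_primitive : FZ.IsPrimitive := by
  intro r hr
  rw [Polynomial.C_dvd_iff_dvd_coeff] at hr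
  have h8 : r ∣ 8 := by have := hr 10; rwa [FZ_coeff] at this
  have h13 : r ∣ -13 := by have := hr 9; rwa [FZ_coeff] at this
  have : r ∣ 1 := by
    have h : (1 : ℤ) = (-5) * (-13) - 8 * 8 := by norm_num
    rw [h]
    exact dvd_sub (Dvd.dvd.mul_left h13 _) (Dvd.dvd.mul_left h8 _)
  exact isUnit_of_dvd_one this

lemma FZ_map_zmod : FZ.map (Int.castRingHom (ZMod 3)) = toPoly FL := by
  rw [FZ_eq, toPoly_map]
  have h : (LZ.map (⇑(Int.castRingHom (ZMod 3)))) = FL := by decide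
  rw [h]

/-- Any divisor of `FZ` of small degree is a unit. -/
lemma small_divisor_unit (a : ℤ[X]) (ha : a ∣ FZ) (hd : a.natDegree ≤ 5) : IsUnit a := by
  have ha0 : a ≠ 0 := fun h => FZ_ne_zero (by simpa [h] using ha)
  have hlc : ((a.leadingCoeff : ZMod 3)) ≠ 0 := by
    obtain ⟨b, hb⟩ := ha
    have hb0 : b ≠ 0 := fun h => FZ_ne_zero (by simp [hb, h])
    have h8 : a.leadingCoeff * b.leadingCoeff = 8 := by
      rw [← Polynomial.leadingCoeff_mul, ← hb, FZ_leadingCoeff]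
    intro h0
    have : ((8 : ℤ) : ZMod 3) = 0 := by
      rw [← h8]; push_cast; rw [h0]; ring
    exact absurd this (by decide)
  rcases Nat.eq_zero_or_pos a.natDegree with h0 | hpos
  · obtain ⟨c, rfl⟩ := Polynomial.natDegree_eq_zero.mp h0
    exact (Polynomial.isUnit_C).mpr (FZ_primitive c ha)
  · exfalso
    set φ := Int.castRingHom (ZMod 3)
    have hlcm : (a.map φ).leadingCoeff ≠ 0 := by
      rwa [Polynomial.leadingCoeff_map_of_leadingCoeff_ne_zero φ hlc]
    have hmapne : a.map φ ≠ 0 := fun h => hlcm (by simp [h])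
    have hdm : (a.map φ).natDegree = a.natDegree :=
      Polynomial.natDegree_map_of_leadingCoeff_ne_zero φ hlc
    set m := (a.map φ) * C (a.map φ).leadingCoeff⁻¹ with hm_def
    have hmonic : m.Monic := Polynomial.monic_mul_leadingCoeff_inv hmapne
    have hmdeg : m.natDegree = a.natDegree := by
      rw [hm_def, Polynomial.natDegree_mul_C (inv_ne_zero hlcm), hdm]
    have hunit : IsUnit (C (a.map φ).leadingCoeff⁻¹) :=
      Polynomial.isUnit_C.mpr (isUnit_iff_ne_zero.mpr (inv_ne_zero hlcm))
    have hmdvd : m ∣ toPoly FL := by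
      rw [← FZ_map_zmod, hm_def]
      exact (hunit.mul_right_dvd).mpr (Polynomial.map_dvd φ ha)
    exact noSmallFactor m hmonic (by omega) (by omega) hmdvd

lemma FZ_irreducible : Irreducible FZ := by
  constructor
  · intro h
    have := Polynomial.natDegree_eq_zero_of_isUnit h
    rw [FZ_natDegree] at this
    omega
  · intro a b hab
    have ha : a ∣ FZ := ⟨b, hab⟩
    have hb : b ∣ FZ := ⟨a, by rw [hab]; ring⟩
    have ha0 : a ≠ 0 := fun h => FZ_ne_zero (by rw [hab, h, zero_mul])
    have hb0 : b ≠ 0 := fun h => FZ_ne_zero (by rw [hab, h, mul_zero])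
    have hsum : a.natDegree + b.natDegree = 10 := by
      rw [← Polynomial.natDegree_mul ha0 hb0, ← hab, FZ_natDegree]
    rcases Nat.le_or_le a.natDegree 5 with h | h
    · exact Or.inl (small_divisor_unit a ha h)
    · exact Or.inr (small_divisor_unit b hb (by omega))

open Polynomial in
/-- The polynomial `P₁₀(r₀) = 8r₀¹⁰ - 13r₀⁹ - ... + 4096` is irreducible over `ℚ`. -/
theorem stmt9 :
    Irreducible (8 * X ^ 10 - 13 * X ^ 9 - 42 * X ^ 8 - 331 * X ^ 7 - 220 * X ^ 6
      + 733 * X ^ 5 + 6646 * X ^ 4 + 19883 * X ^ 3 + 28840 * X ^ 2 + 18224 * X + 4096 :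
      Polynomial ℚ) := by
  have key := (Polynomial.IsPrimitive.Int.irreducible_iff_irreducible_map_cast
    FZ_primitive).mp FZ_irreducible
  have heq : FZ.map (Int.castRingHom ℚ) =
      (8 * X ^ 10 - 13 * X ^ 9 - 42 * X ^ 8 - 331 * X ^ 7 - 220 * X ^ 6
        + 733 * X ^ 5 + 6646 * X ^ 4 + 19883 * X ^ 3 + 28840 * X ^ 2 + 18224 * X + 4096 :
        Polynomial ℚ) := by
    simp only [FZ, Polynomial.map_add, Polynomial.map_sub, Polynomial.map_mul,
      Polynomial.map_pow, Polynomial.map_X, Polynomial.map_ofNat]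
  rwa [heq] at key
end

section
/- In the elliptic surface Y² = X³ + aX² + 8(r-1)⁴(r+1)⁵bt²X + 16(r-1)⁸(r+1)¹⁰ct⁴ with a, b, c, d, p(r) defined as: p(r) = 4(r-1)(r²-2)+1, d = (r²-1)²(9t + (2r-1)p(r)), c = 9t² - (2r-1)(8r²+4r-22)t + (2r-1)²p(r), b = (t-(r²-2r))c + d, a = (t-(r²-2r))²c + 2(t-(r²-2r))d + (r²-1)⁴((4r+4)t + p(r)), the point with X = -4(r-1)⁴(r+1)⁵(2r-1)t²/(r²-r+1)² + 4(r-2)(r+1)⁴t³/(r²-r+1) lies on the surface, i.e., X³ + aX² + 8(r-1)⁴(r+1)⁵bt²X + 16(r-1)⁸(r+1)¹⁰ct⁴ is a square in ℚ(r)[t]. -/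
/-!
Writing `q = r² - r + 1`, the point is `X = x / q²` with `x ∈ ℤ[r, t]`. Multiplying the
right-hand side at `x / q²` by `q⁶` gives a polynomial in `ℤ[r, t]`, and it is the square of
`y = 4 (r + 1)⁴ t³ · (a quadratic in t)`, found by factoring it by computer algebra; hence
`Y = y / q³`.
-/

section SurfacePoint

variable {R : Type*} [CommRing R]

def pointNumX (r t : R) : R :=
  4 * (r + 1) ^ 4 * t ^ 2 * ((r - 2) * (r ^ 2 - r + 1) * t - (r - 1) ^ 4 * (r + 1) * (2 * r - 1))

def pointNumY (r t : R) : R :=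
  4 * (r + 1) ^ 4 * t ^ 3 * (3 * (r - 2) * (r ^ 2 - r + 1) ^ 2 * t ^ 2
    + (r ^ 2 - r + 1) * (13 - 46 * r + 89 * r ^ 2 - 58 * r ^ 3 - 10 * r ^ 4 + 26 * r ^ 5
      - 8 * r ^ 6) * t
    + (-4 + 41 * r - 154 * r ^ 2 + 326 * r ^ 3 - 389 * r ^ 4 + 185 * r ^ 5 + 122 * r ^ 6
      - 209 * r ^ 7 + 83 * r ^ 8 + 17 * r ^ 9 - 22 * r ^ 10 + 5 * r ^ 11))

theorem pointNumY_sq (r t : R) :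
    let p := 4 * (r - 1) * (r ^ 2 - 2) + 1
    let d := (r ^ 2 - 1) ^ 2 * (9 * t + (2 * r - 1) * p)
    let c := 9 * t ^ 2 - (2 * r - 1) * (8 * r ^ 2 + 4 * r - 22) * t + (2 * r - 1) ^ 2 * p
    let b := (t - (r ^ 2 - 2 * r)) * c + d
    let a := (t - (r ^ 2 - 2 * r)) ^ 2 * c + 2 * (t - (r ^ 2 - 2 * r)) * d
      + (r ^ 2 - 1) ^ 4 * ((4 * r + 4) * t + p)
    let q := r ^ 2 - r + 1
    pointNumY r t ^ 2 = pointNumX r t ^ 3 + a * pointNumX r t ^ 2 * q ^ 2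
      + 8 * (r - 1) ^ 4 * (r + 1) ^ 5 * b * t ^ 2 * pointNumX r t * q ^ 4
      + 16 * (r - 1) ^ 8 * (r + 1) ^ 10 * c * t ^ 4 * q ^ 6 := by
  intros
  simp only [pointNumX, pointNumY]
  ring

end SurfacePoint

theorem div_pow_sq_eq_cubic_of_homogeneous {K : Type*} [Field K] {x y A B C q : K} (hq : q ≠ 0)
    (h : y ^ 2 = x ^ 3 + A * x ^ 2 * q ^ 2 + B * x * q ^ 4 + C * q ^ 6) :
    (y / q ^ 3) ^ 2 = (x / q ^ 2) ^ 3 + A * (x / q ^ 2) ^ 2 + B * (x / q ^ 2) + C := by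
  field_simp
  linear_combination h

theorem exists_sq_eq_surface_rhs {K : Type*} [Field K] (r t : K) (hq : r ^ 2 - r + 1 ≠ 0) :
    ∃ Y : K,
      let p := 4 * (r - 1) * (r ^ 2 - 2) + 1
      let d := (r ^ 2 - 1) ^ 2 * (9 * t + (2 * r - 1) * p)
      let c := 9 * t ^ 2 - (2 * r - 1) * (8 * r ^ 2 + 4 * r - 22) * t + (2 * r - 1) ^ 2 * p
      let b := (t - (r ^ 2 - 2 * r)) * c + d
      let a := (t - (r ^ 2 - 2 * r)) ^ 2 * c + 2 * (t - (r ^ 2 - 2 * r)) * d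
        + (r ^ 2 - 1) ^ 4 * ((4 * r + 4) * t + p)
      let X := -(4 * (r - 1) ^ 4 * (r + 1) ^ 5 * (2 * r - 1) * t ^ 2) / (r ^ 2 - r + 1) ^ 2
        + 4 * (r - 2) * (r + 1) ^ 4 * t ^ 3 / (r ^ 2 - r + 1)
      Y ^ 2 = X ^ 3 + a * X ^ 2 + 8 * (r - 1) ^ 4 * (r + 1) ^ 5 * b * t ^ 2 * X
        + 16 * (r - 1) ^ 8 * (r + 1) ^ 10 * c * t ^ 4 := by
  have hX : -(4 * (r - 1) ^ 4 * (r + 1) ^ 5 * (2 * r - 1) * t ^ 2) / (r ^ 2 - r + 1) ^ 2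
      + 4 * (r - 2) * (r + 1) ^ 4 * t ^ 3 / (r ^ 2 - r + 1)
      = pointNumX r t / (r ^ 2 - r + 1) ^ 2 := by
    rw [pointNumX]
    field_simp
    ring
  refine ⟨pointNumY r t / (r ^ 2 - r + 1) ^ 3, ?_⟩
  intro p d c b a X
  rw [show X = pointNumX r t / (r ^ 2 - r + 1) ^ 2 from hX]
  exact div_pow_sq_eq_cubic_of_homogeneous hq (pointNumY_sq r t)

theorem ratFunc_X_sq_sub_X_add_one_ne_zero :
    (RatFunc.X ^ 2 - RatFunc.X + 1 : RatFunc ℚ) ≠ 0 := by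
  have hp : (Polynomial.X ^ 2 - Polynomial.X + 1 : Polynomial ℚ) ≠ 0 := fun h => by
    simpa using congrArg (Polynomial.eval 0) h
  simpa using RatFunc.algebraMap_ne_zero hp

/-- In the `N = 57` family, the given `X` of height `19/12` lies on the surface:
the corresponding right-hand side is a square in `ℚ(r)(t)`. -/
theorem stmt14 :
    ∃ Y : RatFunc (RatFunc ℚ),
      let r : RatFunc (RatFunc ℚ) := RatFunc.C RatFunc.X
      let t : RatFunc (RatFunc ℚ) := RatFunc.X
      let p := 4 * (r - 1) * (r ^ 2 - 2) + 1
      let d := (r ^ 2 - 1) ^ 2 * (9 * t + (2 * r - 1) * p)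
      let c := 9 * t ^ 2 - (2 * r - 1) * (8 * r ^ 2 + 4 * r - 22) * t + (2 * r - 1) ^ 2 * p
      let b := (t - (r ^ 2 - 2 * r)) * c + d
      let a := (t - (r ^ 2 - 2 * r)) ^ 2 * c + 2 * (t - (r ^ 2 - 2 * r)) * d
        + (r ^ 2 - 1) ^ 4 * ((4 * r + 4) * t + p)
      let X := -(4 * (r - 1) ^ 4 * (r + 1) ^ 5 * (2 * r - 1) * t ^ 2) / (r ^ 2 - r + 1) ^ 2
        + 4 * (r - 2) * (r + 1) ^ 4 * t ^ 3 / (r ^ 2 - r + 1)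
      Y ^ 2 = X ^ 3 + a * X ^ 2 + 8 * (r - 1) ^ 4 * (r + 1) ^ 5 * b * t ^ 2 * X
        + 16 * (r - 1) ^ 8 * (r + 1) ^ 10 * c * t ^ 4 := by
  have hq := (map_ne_zero (RatFunc.C : RatFunc ℚ →+* RatFunc (RatFunc ℚ))).mpr
    ratFunc_X_sq_sub_X_add_one_ne_zero
  rw [map_add, map_sub, map_pow, map_one] at hq
  exact exists_sq_eq_surface_rhs _ _ hq
end
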